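/- Soundness of the Hilbert calculus H_S4 with respect to the restricted Nmatrix R(M'_S4): for every set Γ of modal formulas and every modal formula φ, if Γ ⊢_S4 φ then for every level valuation v ∈ L'_S4, v(φ) ∈ D = {1,2} whenever v(γ) ∈ D for every γ ∈ Γ. -/

import Mathlib

/-- Modal formulas over signature Σ = {¬, □, →, ∨, ∧}. -/
inductive MF
  | var : ℕ → MF
  | neg : MF → MF
  | box : MF → MF
  | imp : MF → MF → MF
  | dis : MF → MF → MF
  | con : MF → MF → MF
deriving DecidableEq

/-- The three truth values 0, 1, 2. -/
inductive V3
  | z | o | t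
deriving DecidableEq

/-- Designated values D = {1, 2}. -/
def Des : Set V3 := {V3.o, V3.t}

def negOp : V3 → Set V3
  | .z => {.o, .t}
  | .o => {.z}
  | .t => {.z}

def boxOp : V3 → Set V3
  | .z => {.z}
  | .o => {.z}
  | .t => {.t}

def impOp : V3 → V3 → Set V3
  | .z, .z => {.o, .t}
  | .z, .o => {.o, .t}
  | .z, .t => {.t}
  | .o, .z => {.z}
  | .o, .o => {.o, .t}
  | .o, .t => {.t}
  | .t, .z => {.z}
  | .t, .o => {.o}
  | .t, .t => {.t}

def disOp : V3 → V3 → Set V3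
  | .z, .z => {.z}
  | .z, .o => {.o, .t}
  | .o, .z => {.o, .t}
  | .o, .o => {.o, .t}
  | _, _ => {.t}

def conOp : V3 → V3 → Set V3
  | .z, _ => {.z}
  | _, .z => {.z}
  | .t, .t => {.t}
  | _, _ => {.o}

/-- Valuations over the reduced Nmatrix M'_S4. -/
def IsVal (v : MF → V3) : Prop :=
  (∀ α, v (.neg α) ∈ negOp (v α)) ∧
  (∀ α, v (.box α) ∈ boxOp (v α)) ∧
  (∀ α β, v (.imp α β) ∈ impOp (v α) (v β)) ∧
  (∀ α β, v (.dis α β) ∈ disOp (v α) (v β)) ∧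
  (∀ α β, v (.con α β) ∈ conOp (v α) (v β))

/-- The levels L_k. -/
def LevelS4 : ℕ → Set (MF → V3)
  | 0 => {v | IsVal v}
  | (k+1) => {v ∈ LevelS4 k | ∀ α, (∀ w ∈ LevelS4 k, w α ∈ Des) → v α = V3.t}

/-- Level valuations L'_S4 = ⋂_{k ≥ 0} L_k. -/
def LVS4 : Set (MF → V3) := ⋂ k, LevelS4 k

/-- Theorems of the Hilbert calculus H_S4 : classical propositional axioms over
{¬,→,∨,∧}, plus K, T, 4, with modus ponens and necessitation. -/
inductive S4Thm : MF → Prop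
  | ax1 (α β : MF) : S4Thm (α.imp (β.imp α))
  | ax2 (α β γ : MF) : S4Thm ((α.imp (β.imp γ)).imp ((α.imp β).imp (α.imp γ)))
  | ax3 (α β : MF) : S4Thm (α.imp (β.imp (α.con β)))
  | ax4 (α β : MF) : S4Thm ((α.con β).imp α)
  | ax5 (α β : MF) : S4Thm ((α.con β).imp β)
  | ax6 (α β : MF) : S4Thm (α.imp (α.dis β))
  | ax7 (α β : MF) : S4Thm (β.imp (α.dis β))
  | ax8 (α β γ : MF) : S4Thm ((α.imp γ).imp ((β.imp γ).imp ((α.dis β).imp γ)))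
  | ax9 (α β : MF) : S4Thm ((β.imp α).imp ((β.imp α.neg).imp β.neg))
  | ax10 (α β : MF) : S4Thm (α.imp (α.neg.imp β))
  | dne (α : MF) : S4Thm (α.neg.neg.imp α)
  | axK (α β : MF) : S4Thm ((α.imp β).box.imp (α.box.imp β.box))
  | axT (α : MF) : S4Thm (α.box.imp α)
  | axFour (α : MF) : S4Thm (α.box.imp α.box.box)
  | mp {α β : MF} : S4Thm (α.imp β) → S4Thm α → S4Thm β
  | nec {α : MF} : S4Thm α → S4Thm α.box

/-- Γ ⊢_S4 φ : either φ is a theorem, or some β₁,…,βₙ ∈ Γ (n ≥ 1) give a theorem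
β₁ → (β₂ → (… → (βₙ → φ)…)). -/
def S4Deriv (Γ : Set MF) (φ : MF) : Prop :=
  S4Thm φ ∨ ∃ l : List MF, l ≠ [] ∧ (∀ β ∈ l, β ∈ Γ) ∧ S4Thm (l.foldr MF.imp φ)

/-- Δ is φ-saturated (w.r.t. ⊢_S4). -/
def SatS4 (Δ : Set MF) (φ : MF) : Prop :=
  ¬ S4Deriv Δ φ ∧ ∀ α ∉ Δ, S4Deriv (insert α Δ) φ

open Classical in
/-- The canonical function v_Δ. -/
noncomputable def vDeltaS4 (Δ : Set MF) : MF → V3 :=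
  fun α => if MF.box α ∈ Δ then V3.t else if α ∈ Δ then V3.o else V3.z

/-- Λ is closed under (immediate, hence all) subformulas. -/
def SubClosed (Λ : Set MF) : Prop :=
  (∀ α, MF.neg α ∈ Λ → α ∈ Λ) ∧
  (∀ α, MF.box α ∈ Λ → α ∈ Λ) ∧
  (∀ α β, MF.imp α β ∈ Λ → α ∈ Λ ∧ β ∈ Λ) ∧
  (∀ α β, MF.dis α β ∈ Λ → α ∈ Λ ∧ β ∈ Λ) ∧
  (∀ α β, MF.con α β ∈ Λ → α ∈ Λ ∧ β ∈ Λ)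

/-- Partial valuations with domain Λ (modelled as total functions constrained on Λ). -/
def IsPVal (Λ : Set MF) (v : MF → V3) : Prop :=
  (∀ α, MF.neg α ∈ Λ → v (.neg α) ∈ negOp (v α)) ∧
  (∀ α, MF.box α ∈ Λ → v (.box α) ∈ boxOp (v α)) ∧
  (∀ α β, MF.imp α β ∈ Λ → v (.imp α β) ∈ impOp (v α) (v β)) ∧
  (∀ α β, MF.dis α β ∈ Λ → v (.dis α β) ∈ disOp (v α) (v β)) ∧
  (∀ α β, MF.con α β ∈ Λ → v (.con α β) ∈ conOp (v α) (v β))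

/-- PLV'(Λ): partial' level valuations over Λ (witnesses amongst level valuations). -/
def PLV' (Λ : Set MF) : Set (MF → V3) :=
  {v | IsPVal Λ v ∧ ∀ α ∈ Λ, v α = V3.o →
    ∃ w ∈ LVS4, w α = V3.z ∧ ∀ β ∈ Λ, v β = V3.t → w β = V3.t}

/-- PLV(Λ): partial level valuations over Λ, defined as the largest subset of
PV(Λ) whose condition is witnessed inside itself. -/
def PLV (Λ : Set MF) : Set (MF → V3) :=
  ⋃₀ {S | (∀ v ∈ S, IsPVal Λ v) ∧
      ∀ v ∈ S, ∀ α ∈ Λ, v α = V3.o →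
        ∃ w ∈ S, w α = V3.z ∧ ∀ β ∈ Λ, v β = V3.t → w β = V3.t}

/-- Set of subformulas of a modal formula. -/
def MF.subf : MF → Finset MF
  | .var n => {.var n}
  | .neg α => insert (.neg α) α.subf
  | .box α => insert (.box α) α.subf
  | .imp α β => insert (.imp α β) (α.subf ∪ β.subf)
  | .dis α β => insert (.dis α β) (α.subf ∪ β.subf)
  | .con α β => insert (.con α β) (α.subf ∪ β.subf)

/-!
Under every valuation of M'_S4, designation behaves classically for `¬`, `→`, `∨`, `∧`, and
`□α` is designated exactly when `α` has value 2; hence the propositional axioms and K, T, 4 are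
designated and modus ponens preserves designation. Necessitation is where the levels enter: by
induction, every theorem is designated throughout some level `L n`, so every valuation of
`L (n + 1)` gives it the value 2 and its box is designated. Level valuations lie in every level.
-/

namespace IsVal

variable {v : MF → V3} (hv : IsVal v)
include hv

theorem neg_mem_Des_iff (α : MF) : v α.neg ∈ Des ↔ v α ∉ Des := by
  have := hv.1 α
  cases h : v α <;> cases h' : v α.neg <;> simp_all [negOp, Des]

theorem box_eq_t_iff (α : MF) : v α.box = .t ↔ v α = .t := by
  have := hv.2.1 α
  cases h : v α <;> cases h' : v α.box <;> simp_all [boxOp]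

theorem box_mem_Des_iff (α : MF) : v α.box ∈ Des ↔ v α = .t := by
  have := hv.2.1 α
  cases h : v α <;> cases h' : v α.box <;> simp_all [boxOp, Des]

theorem imp_mem_Des_iff (α β : MF) : v (α.imp β) ∈ Des ↔ (v α ∈ Des → v β ∈ Des) := by
  have := hv.2.2.1 α β
  cases h : v α <;> cases h' : v β <;> cases h'' : v (α.imp β) <;> simp_all [impOp, Des]

theorem eq_t_of_imp_eq_t {α β : MF} (himp : v (α.imp β) = .t) (hα : v α = .t) : v β = .t := by
  have := hv.2.2.1 α β
  rw [himp, hα] at this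
  cases h : v β <;> simp_all [impOp]

theorem dis_mem_Des_iff (α β : MF) : v (α.dis β) ∈ Des ↔ (v α ∈ Des ∨ v β ∈ Des) := by
  have := hv.2.2.2.1 α β
  cases h : v α <;> cases h' : v β <;> cases h'' : v (α.dis β) <;> simp_all [disOp, Des]

theorem con_mem_Des_iff (α β : MF) : v (α.con β) ∈ Des ↔ (v α ∈ Des ∧ v β ∈ Des) := by
  have := hv.2.2.2.2 α β
  cases h : v α <;> cases h' : v β <;> cases h'' : v (α.con β) <;> simp_all [conOp, Des]

theorem mem_Des_of_foldr_imp {φ : MF} (l : List MF) (hl : v (l.foldr MF.imp φ) ∈ Des)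
    (hprem : ∀ β ∈ l, v β ∈ Des) : v φ ∈ Des := by
  induction l with
  | nil => exact hl
  | cons β l ih =>
    rw [List.foldr_cons, hv.imp_mem_Des_iff] at hl
    exact ih (hl (hprem β List.mem_cons_self)) fun γ hγ => hprem γ (List.mem_cons_of_mem β hγ)

end IsVal

theorem LevelS4_succ_subset (k : ℕ) : LevelS4 (k + 1) ⊆ LevelS4 k := fun _ hv => hv.1

theorem LevelS4_antitone : Antitone LevelS4 :=
  antitone_nat_of_succ_le LevelS4_succ_subset

theorem isVal_of_mem_LevelS4 {k : ℕ} {v : MF → V3} (hv : v ∈ LevelS4 k) : IsVal v :=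
  LevelS4_antitone (Nat.zero_le k) hv

theorem mem_LevelS4_of_mem_LVS4 {v : MF → V3} (hv : v ∈ LVS4) (k : ℕ) : v ∈ LevelS4 k :=
  Set.mem_iInter.mp hv k

theorem S4Thm.exists_level_mem_Des {α : MF} (h : S4Thm α) :
    ∃ n, ∀ v ∈ LevelS4 n, v α ∈ Des := by
  induction h with
  | mp _ _ ih₁ ih₂ =>
    obtain ⟨n₁, h₁⟩ := ih₁
    obtain ⟨n₂, h₂⟩ := ih₂
    refine ⟨max n₁ n₂, fun v hv => ?_⟩
    have hv₁ := h₁ v (LevelS4_antitone (le_max_left n₁ n₂) hv)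
    rw [(isVal_of_mem_LevelS4 hv).imp_mem_Des_iff] at hv₁
    exact hv₁ (h₂ v (LevelS4_antitone (le_max_right n₁ n₂) hv))
  | @nec α _ ih =>
    obtain ⟨n, hn⟩ := ih
    refine ⟨n + 1, fun v hv => ?_⟩
    rw [(isVal_of_mem_LevelS4 hv).box_mem_Des_iff]
    exact hv.2 α hn
  | axK α β =>
    refine ⟨0, fun v hv => ?_⟩
    simp only [hv.imp_mem_Des_iff, hv.box_mem_Des_iff]
    exact hv.eq_t_of_imp_eq_t
  | axFour α =>
    refine ⟨0, fun v hv => ?_⟩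
    simp only [hv.imp_mem_Des_iff, hv.box_mem_Des_iff, hv.box_eq_t_iff, imp_self]
  | _ =>
    refine ⟨0, fun v hv => ?_⟩
    simp only [hv.imp_mem_Des_iff, hv.neg_mem_Des_iff, hv.dis_mem_Des_iff, hv.con_mem_Des_iff,
      hv.box_mem_Des_iff]
    -- `tauto` cannot treat `_ ∈ Des` as an atom, so membership is unfolded first.
    simp only [Des, Set.mem_insert_iff, Set.mem_singleton_iff]
    tauto

theorem S4Thm.mem_Des_of_mem_LVS4 {α : MF} (h : S4Thm α) {v : MF → V3} (hv : v ∈ LVS4) :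
    v α ∈ Des := by
  obtain ⟨n, hn⟩ := h.exists_level_mem_Des
  exact hn v (mem_LevelS4_of_mem_LVS4 hv n)

/-- Soundness of H_S4 w.r.t. R(M'_S4). -/
theorem s4_soundness (Γ : Set MF) (φ : MF) (h : S4Deriv Γ φ) :
    ∀ v ∈ LVS4, (∀ γ ∈ Γ, v γ ∈ Des) → v φ ∈ Des := by
  intro v hv hΓ
  rcases h with hthm | ⟨l, -, hlΓ, hthm⟩
  · exact hthm.mem_Des_of_mem_LVS4 hv
  · exact (isVal_of_mem_LevelS4 (mem_LevelS4_of_mem_LVS4 hv 0)).mem_Des_of_foldr_imp l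
      (hthm.mem_Des_of_mem_LVS4 hv) fun β hβ => hΓ β (hlΓ β hβ)
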